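/- In a moving semigroup (M,·), a set A ⊆ M is IIP if and only if it is DIP. -/

import Mathlib

open Filter FirstOrder FirstOrder.Language

attribute [local instance] Ultrafilter.mul

/-! ## Combinatorial notions in a semigroup -/

/-- `X` is an IP set: it contains `FP u` (all finite products, in increasing order of indices,
of distinct terms) of some sequence `u`. -/
def IsIP {M : Type*} [Semigroup M] (X : Set M) : Prop :=
  ∃ u : Stream' M, Hindman.FP u ⊆ X

/-- `X` is IIP (infinitely IP): it contains an infinite set of the form `FP u`. -/
def IsIIP {M : Type*} [Semigroup M] (X : Set M) : Prop :=
  ∃ u : Stream' M, Hindman.FP u ⊆ X ∧ (Hindman.FP u).Infinite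

/-- `X` is DIP (distinctly IP): it contains `FP u` for an injective sequence `u`. -/
def IsDIP {M : Type*} [Semigroup M] (X : Set M) : Prop :=
  ∃ u : Stream' M, Function.Injective u ∧ Hindman.FP u ⊆ X

/-- An ultrafilter is nonprincipal if it is not of the form `{A | a ∈ A}` for any `a`. -/
def Ultrafilter.Nonprincipal {M : Type*} (U : Ultrafilter M) : Prop :=
  ∀ a : M, U ≠ pure a

/-- A semigroup is moving if the product of two nonprincipal ultrafilters
(for the ultrafilter product `A ∈ U * V ↔ {m | {n | m * n ∈ A} ∈ V} ∈ U`) is nonprincipal. -/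
def IsMoving (M : Type*) [Semigroup M] : Prop :=
  ∀ U V : Ultrafilter M, U.Nonprincipal → V.Nonprincipal → (U * V).Nonprincipal

/-! ## Types over a semigroup structure -/

/-- Formulas in one free variable, with parameters from `M`. -/
abbrev Form1 (L : Language) (M : Type*) := L.Formula (M ⊕ Fin 1)

/-- Formulas in two free variables (`x` and `y`), with parameters from `M`. -/
abbrev Form2 (L : Language) (M : Type*) := L.Formula (M ⊕ Fin 2)

/-- Realization of a 1-variable formula with parameters at the point `a`. -/
def Realize1 {L : Language} {M : Type*} (S : L.Structure M) (φ : Form1 L M) (a : M) : Prop :=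
  @Formula.Realize L M S _ φ (Sum.elim id fun _ => a)

/-- Realization of a 2-variable formula with parameters at the pair `(a, b)`. -/
def Realize2 {L : Language} {M : Type*} (S : L.Structure M) (φ : Form2 L M) (a b : M) : Prop :=
  @Formula.Realize L M S _ φ (Sum.elim id ![a, b])

/-- A complete 1-type over the structure `S` (with parameters for all elements of `M`):
a complete, finitely satisfiable (in `S`) set of formulas in one free variable. -/
def IsCompleteType1 {L : Language} {M : Type*} (S : L.Structure M)
    (p : Set (Form1 L M)) : Prop :=
  (∀ φ : Form1 L M, φ ∈ p ↔ φ.not ∉ p) ∧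
    ∀ s : Finset (Form1 L M), ↑s ⊆ p → ∃ a : M, ∀ φ ∈ s, Realize1 S φ a

/-- A complete 2-type over the structure `S` (with parameters for all elements of `M`). -/
def IsCompleteType2 {L : Language} {M : Type*} (S : L.Structure M)
    (q : Set (Form2 L M)) : Prop :=
  (∀ φ : Form2 L M, φ ∈ q ↔ φ.not ∉ q) ∧
    ∀ s : Finset (Form2 L M), ↑s ⊆ q → ∃ a b : M, ∀ φ ∈ s, Realize2 S φ a b

/-- `substX u φ` is `φ(u, y)`: the element `u` is substituted for the variable `x`. -/
def substX {L : Language} {M : Type*} (u : M) (φ : Form2 L M) : Form2 L M :=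
  φ.subst (Sum.elim (fun m => Term.var (Sum.inl m))
    ![Term.var (Sum.inl u), Term.var (Sum.inr 1)])

/-- A 2-type `q(x, y)` is independent if for every `φ(x, y) ∈ q` there is `u ∈ M` with
`φ(u, y) ∈ q`. -/
def IsIndependent {L : Language} {M : Type*} (q : Set (Form2 L M)) : Prop :=
  ∀ φ ∈ q, ∃ u : M, substX u φ ∈ q

/-- `toX φ` views the 1-variable formula `φ` as a 2-variable formula `φ(x)`. -/
def toX {L : Language} {M : Type*} (φ : Form1 L M) : Form2 L M :=
  φ.subst (Sum.elim (fun m => Term.var (Sum.inl m)) fun _ => Term.var (Sum.inr 0))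

/-- `toY φ` views the 1-variable formula `φ` as a 2-variable formula `φ(y)`. -/
def toY {L : Language} {M : Type*} (φ : Form1 L M) : Form2 L M :=
  φ.subst (Sum.elim (fun m => Term.var (Sum.inl m)) fun _ => Term.var (Sum.inr 1))

/-- `toXY f φ` is `φ(x · y)`, where `f` is the distinguished binary function symbol. -/
def toXY {L : Language} {M : Type*} (f : L.Functions 2) (φ : Form1 L M) : Form2 L M :=
  φ.subst (Sum.elim (fun m => Term.var (Sum.inl m))
    fun _ => Term.func f ![Term.var (Sum.inr 0), Term.var (Sum.inr 1)])

/-- A complete 1-type `p` over `S` is idempotent (with respect to the binary function symbol `f`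
interpreted as the semigroup operation) if there is an independent complete 2-type `q(x, y)` with
`p(x) ⊆ q`, `p(y) ⊆ q` and `p(x · y) ⊆ q`. -/
def IsIdempotentType {L : Language} {M : Type*} (S : L.Structure M) (f : L.Functions 2)
    (p : Set (Form1 L M)) : Prop :=
  IsCompleteType1 S p ∧
    ∃ q : Set (Form2 L M), IsCompleteType2 S q ∧ IsIndependent q ∧
      (∀ φ ∈ p, toX φ ∈ q) ∧ (∀ φ ∈ p, toY φ ∈ q) ∧ (∀ φ ∈ p, toXY f φ ∈ q)

/-- A 1-type over `S` is principal if it is realized by an element of `M`. -/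
def IsPrincipalType {L : Language} {M : Type*} (S : L.Structure M)
    (p : Set (Form1 L M)) : Prop :=
  ∃ a : M, ∀ φ ∈ p, Realize1 S φ a

/-!
A DIP set is IIP since `FP u` contains the distinct terms of `u`. Conversely, if `FP u` is
infinite then so is every `FP (u.drop n)`, so there are nonprincipal ultrafilters containing all
of them; these form a compact subsemigroup of `βM`, because `M` is moving, and hence contain an
idempotent `U`. Running the Galvin–Glazer construction inside `U` and deleting at each step the
element just chosen (a cofinite, hence `U`-large, change) yields an injective `a` with
`FP a ⊆ FP u`.
-/

attribute [local instance] Ultrafilter.semigroup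

namespace Ultrafilter

variable {M : Type*}

theorem nonprincipal_iff_le_cofinite {U : Ultrafilter M} :
    U.Nonprincipal ↔ (U : Filter M) ≤ cofinite := by
  have eq_pure_iff (a : M) : U = pure a ↔ {a} ∈ U := by
    rw [← coe_inj, coe_pure, U.neBot.eq_pure_iff, mem_coe]
  simp only [Nonprincipal, le_cofinite_iff_compl_singleton_mem, mem_coe, compl_mem_iff_notMem,
    Ne, eq_pure_iff]

theorem isClosed_setOf_nonprincipal : IsClosed {U : Ultrafilter M | U.Nonprincipal} := by
  simp only [nonprincipal_iff_le_cofinite, le_cofinite_iff_compl_singleton_mem, mem_coe,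
    Set.ofPred_forall]
  exact isClosed_iInter fun x => ultrafilter_isClosed_basic _

theorem exists_nonprincipal_mem {s : Set M} (hs : s.Infinite) :
    ∃ U : Ultrafilter M, U.Nonprincipal ∧ s ∈ U := by
  have : (cofinite ⊓ 𝓟 s).NeBot := cofinite_inf_principal_neBot_iff.2 hs
  refine ⟨.of (cofinite ⊓ 𝓟 s), ?_, (of_le _).trans inf_le_right (mem_principal_self s)⟩
  exact nonprincipal_iff_le_cofinite.2 ((of_le _).trans inf_le_left)

end Ultrafilter

namespace Hindman

variable {M : Type*} [Semigroup M]

theorem FP_tail_infinite {a : Stream' M} (h : (FP a).Infinite) : (FP a.tail).Infinite := by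
  have h_sub : FP a ⊆ insert a.head (FP a.tail ∪ (a.head * ·) '' FP a.tail) := by
    rintro m (_ | ⟨_, _, hm⟩ | ⟨_, _, hm⟩)
    · exact Set.mem_insert _ _
    · exact Or.inr (Or.inl hm)
    · exact Or.inr (Or.inr ⟨_, hm, rfl⟩)
  intro h_fin
  exact h (((h_fin.union (h_fin.image _)).insert _).subset h_sub)

theorem FP_drop_infinite {a : Stream' M} (h : (FP a).Infinite) (n : ℕ) :
    (FP (a.drop n)).Infinite := by
  induction n with
  | zero => exact h
  | succ n ih => simpa using FP_tail_infinite ih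

theorem FP_drop_mem_mul {a : Stream' M} {U V : Ultrafilter M} (hU : ∀ n, FP (a.drop n) ∈ U)
    (hV : ∀ n, FP (a.drop n) ∈ V) (n : ℕ) : FP (a.drop n) ∈ U * V := by
  show ∀ᶠ m in ↑(U * V), m ∈ FP (a.drop n)
  rw [Ultrafilter.eventually_mul]
  filter_upwards [hU n] with m hm
  obtain ⟨k, hk⟩ := FP.mul hm
  filter_upwards [hV (k + n)] with m' hm'
  exact hk m' (by rwa [Stream'.drop_drop, add_comm])

end Hindman

open Hindman

theorem IsMoving.exists_idempotent_nonprincipal_FP_mem {M : Type*} [Semigroup M]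
    (hM : IsMoving M) {a : Stream' M} (ha : (FP a).Infinite) :
    ∃ U : Ultrafilter M, U * U = U ∧ U.Nonprincipal ∧ FP a ∈ U := by
  let T (n : ℕ) : Set (Ultrafilter M) := {U | U.Nonprincipal ∧ FP (a.drop n) ∈ U}
  have hT_closed (n : ℕ) : IsClosed (T n) :=
    Ultrafilter.isClosed_setOf_nonprincipal.inter (ultrafilter_isClosed_basic _)
  have hT_nonempty (n : ℕ) : (T n).Nonempty :=
    Ultrafilter.exists_nonprincipal_mem (FP_drop_infinite ha n)
  have hT_succ (n : ℕ) : T (n + 1) ⊆ T n := fun U hU =>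
    ⟨hU.1, mem_of_superset hU.2 (Stream'.drop_drop 1 n a ▸ FP_drop_subset_FP (a.drop n) 1)⟩
  have hS_nonempty : (⋂ n, T n).Nonempty :=
    IsCompact.nonempty_iInter_of_sequence_nonempty_isCompact_isClosed T hT_succ hT_nonempty
      (hT_closed 0).isCompact hT_closed
  have hS_mul : ∀ᵉ (U ∈ ⋂ n, T n) (V ∈ ⋂ n, T n), U * V ∈ ⋂ n, T n := by
    simp only [Set.mem_iInter]
    intro U hU V hV n
    exact ⟨hM U V (hU 0).1 (hV 0).1, FP_drop_mem_mul (fun k => (hU k).2) (fun k => (hV k).2) n⟩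
  obtain ⟨U, hU, hUU⟩ := exists_idempotent_in_compact_subsemigroup
    Ultrafilter.continuous_mul_left _ hS_nonempty (isClosed_iInter hT_closed).isCompact hS_mul
  obtain ⟨hU_np, hU_mem⟩ := Set.mem_iInter.1 hU 0
  exact ⟨U, hUU, hU_np, hU_mem⟩

section IteratedChoice

variable {M σ : Type*} {S : σ → Set M} {elem : σ → M} {next : σ → σ}

theorem Hindman.FP_iterate_subset [Semigroup M] (h_mem : ∀ p, elem p ∈ S p)
    (h_next : ∀ p, S (next p) ⊆ S p ∩ {m | elem p * m ∈ S p}) (p : σ) :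
    FP (fun n => elem (next^[n] p)) ⊆ S p := by
  suffices ∀ a, ∀ m ∈ FP a, ∀ p, a = (fun n => elem (next^[n] p)) → m ∈ S p from
    fun m hm => this _ m hm p rfl
  have tail_eq (p : σ) : Stream'.tail (fun n => elem (next^[n] p)) =
      fun n => elem (next^[n] (next p)) :=
    funext fun n => congrArg elem (Function.iterate_succ_apply next n p)
  intro a m hm
  induction hm with
  | head' a => rintro p rfl; exact h_mem p
  | tail' a m _ ih => rintro p rfl; exact (h_next p (ih (next p) (tail_eq p))).1
  | cons' a m _ ih => rintro p rfl; exact (h_next p (ih (next p) (tail_eq p))).2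

theorem injective_elem_iterate (h_mem : ∀ p, elem p ∈ S p) (h_anti : ∀ p, S (next p) ⊆ S p)
    (h_avoid : ∀ p, elem p ∉ S (next p)) (p : σ) :
    Function.Injective fun n => elem (next^[n] p) := by
  have h_antitone : Antitone fun n => S (next^[n] p) := antitone_nat_of_succ_le fun n => by
    simpa only [Function.iterate_succ_apply'] using h_anti _
  have h_ne {i j : ℕ} (hij : i < j) : elem (next^[j] p) ≠ elem (next^[i] p) := fun h => by
    have h_later : elem (next^[j] p) ∈ S (next^[i + 1] p) := h_antitone hij (h_mem _)
    rw [Function.iterate_succ_apply', h] at h_later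
    exact h_avoid _ h_later
  intro i j h
  by_contra hne
  rcases Ne.lt_or_gt hne with hij | hij
  · exact h_ne hij h.symm
  · exact h_ne hij h

end IteratedChoice

theorem Ultrafilter.exists_injective_FP_subset {M : Type*} [Semigroup M] {U : Ultrafilter M}
    (hUU : U * U = U) (hU : U.Nonprincipal) {s : Set M} (hs : s ∈ U) :
    ∃ a : Stream' M, Function.Injective a ∧ FP a ⊆ s := by
  have h_cof := nonprincipal_iff_le_cofinite.1 hU
  have step (t : {t : Set M // t ∈ U}) : ∃ m ∈ t.1, ∃ t' : {t : Set M // t ∈ U},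
      t'.1 ⊆ t.1 ∩ {m' | m * m' ∈ t.1} ∧ m ∉ t'.1 := by
    obtain ⟨t, ht⟩ := t
    have h_mul : {m | ∀ᶠ m' in U, m * m' ∈ t} ∈ U := (hUU.symm ▸ ht : t ∈ U * U)
    obtain ⟨m, hm, hm_mul⟩ := nonempty_of_mem (inter_mem ht h_mul)
    refine ⟨m, hm, ⟨t ∩ {m' | m * m' ∈ t} ∩ {m}ᶜ, inter_mem (inter_mem ht hm_mul)
      (le_cofinite_iff_compl_singleton_mem.1 h_cof m)⟩, Set.inter_subset_left, fun h => h.2 rfl⟩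
  choose elem h_mem next h_next h_avoid using step
  exact ⟨fun n => elem (next^[n] ⟨s, hs⟩),
    injective_elem_iterate h_mem (fun t => (h_next t).trans Set.inter_subset_left) h_avoid _,
    FP_iterate_subset h_mem h_next _⟩

/-- in a moving semigroup, the notions IIP and DIP coincide. -/
theorem isIIP_iff_isDIP {M : Type*} [Semigroup M] (hM : IsMoving M) (A : Set M) :
    IsIIP A ↔ IsDIP A := by
  constructor
  · rintro ⟨u, hu_sub, hu_inf⟩
    obtain ⟨U, hUU, hU, hu_mem⟩ := hM.exists_idempotent_nonprincipal_FP_mem hu_inf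
    obtain ⟨a, ha_inj, ha_sub⟩ := Ultrafilter.exists_injective_FP_subset hUU hU hu_mem
    exact ⟨a, ha_inj, ha_sub.trans hu_sub⟩
  · rintro ⟨u, hu_inj, hu_sub⟩
    exact ⟨u, hu_sub, Set.infinite_of_injective_forall_mem hu_inj (FP.singleton u)⟩
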